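/- arXiv:1408.0371 — 6 statements merged into one kernel-verified Lean document; each statement's English description precedes it below -/
import Mathlib

section
/- Let G be a graph on n vertices with e edges, where 0 < e < n(n-1)/2, and let G̅ be its complement. Then m·K_n can be partitioned into copies of G if and only if m·(n(n-1)/2 − e)/e · K_n can be partitioned into copies of G̅. (In particular, if l copies of G partition m·K_n, then the same l copies' complements partition (l−m)·K_n into copies of G̅.) -/
/-!
If copies `H₁, …, H_l` of `G` cover every pair of vertices exactly `m` times, then their
complements cover every pair exactly `l - m` times. Counting edges gives `l e = m N` with
`N = n(n-1)/2`, so `(l - m) e = m (N - e)`, i.e. `l - m = m'`. The converse is the same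
argument applied to `Gᶜ`, which has `N - e > 0` edges.
-/

/-- The edge multiset of the multigraph `m·K_V` can be partitioned into copies
of `G`. -/
def CanPartitionMultiKn {V : Type*} (G : SimpleGraph V) (m : ℕ) : Prop :=
  ∃ (l : ℕ) (H : Fin l → SimpleGraph V),
    (∀ i, Nonempty (H i ≃g G)) ∧
    ∀ u v : V, u ≠ v → Nat.card {i : Fin l // (H i).Adj u v} = m

open Finset

namespace SimpleGraph

variable {V W ι : Type*}

def Iso.compl {G : SimpleGraph V} {G' : SimpleGraph W} (f : G ≃g G') : Gᶜ ≃g G'ᶜ where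
  toEquiv := f.toEquiv
  map_rel_iff' := by simp [f.map_adj_iff]

theorem card_edgeFinset_compl [Fintype V] [DecidableEq V] (G : SimpleGraph V)
    [DecidableRel G.Adj] :
    #Gᶜ.edgeFinset = #(⊤ : SimpleGraph V).edgeFinset - #G.edgeFinset := by
  rw [← card_sdiff_of_subset (edgeFinset_mono le_top), ← edgeFinset_sdiff]
  congr 1
  ext
  simp only [mem_edgeFinset, top_sdiff]

section Family

variable [Fintype ι] (H : ι → SimpleGraph V)

theorem card_compl_adj {u v : V} (huv : u ≠ v) :
    Nat.card {i // (H i)ᶜ.Adj u v} = Fintype.card ι - Nat.card {i // (H i).Adj u v} := by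
  classical
  simp only [compl_adj, huv, ne_eq, not_false_eq_true, true_and, Nat.card_eq_fintype_card,
    Fintype.card_subtype_compl]

theorem sum_card_edgeFinset_eq_mul [Fintype V] [DecidableEq V] [∀ i, DecidableRel (H i).Adj]
    {m : ℕ} (hH : ∀ u v, u ≠ v → Nat.card {i // (H i).Adj u v} = m) :
    ∑ i, #(H i).edgeFinset = m * #(⊤ : SimpleGraph V).edgeFinset := by
  let r : ι → Sym2 V → Prop := fun i s => s ∈ (H i).edgeSet
  have hcover : ∀ s ∈ (⊤ : SimpleGraph V).edgeFinset, #(univ.bipartiteBelow r s) = m := by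
    intro s
    induction s with
    | h u v =>
      intro huv
      rw [← hH u v (by simpa using huv), Nat.card_eq_fintype_card, Fintype.card_subtype]
      rfl
  calc ∑ i, #(H i).edgeFinset
      = ∑ i, #((⊤ : SimpleGraph V).edgeFinset.bipartiteAbove r i) := by
        refine sum_congr rfl fun i _ => congrArg card ?_
        ext s
        simpa [r, bipartiteAbove] using (H i).not_isDiag_of_mem_edgeSet
    _ = ∑ s ∈ (⊤ : SimpleGraph V).edgeFinset, #(univ.bipartiteBelow r s) :=
        sum_card_bipartiteAbove_eq_sum_card_bipartiteBelow _
    _ = m * #(⊤ : SimpleGraph V).edgeFinset := (sum_const_nat hcover).trans (mul_comm _ _)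

end Family

end SimpleGraph

open SimpleGraph

theorem CanPartitionMultiKn.compl {V : Type*} [Fintype V] [DecidableEq V] {G : SimpleGraph V}
    [DecidableRel G.Adj] {m m' : ℕ} (hG : 0 < #G.edgeFinset)
    (hm' : m' * #G.edgeFinset = m * (#(⊤ : SimpleGraph V).edgeFinset - #G.edgeFinset))
    (h : CanPartitionMultiKn G m) : CanPartitionMultiKn Gᶜ m' := by
  classical
  obtain ⟨l, H, hiso, hcount⟩ := h
  have hl : l * #G.edgeFinset = m * #(⊤ : SimpleGraph V).edgeFinset := by
    rw [← sum_card_edgeFinset_eq_mul H hcount]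
    simp [fun i => (hiso i).some.card_edgeFinset_eq]
  have hlm : l - m = m' :=
    Nat.eq_of_mul_eq_mul_right hG (by rw [Nat.sub_mul, hl, ← Nat.mul_sub, hm'])
  refine ⟨l, fun i => (H i)ᶜ, fun i => ⟨(hiso i).some.compl⟩, fun u v huv => ?_⟩
  rw [card_compl_adj H huv, hcount u v huv, Fintype.card_fin, hlm]

theorem partition_complement_iff {V : Type*} [Fintype V] [DecidableEq V]
    (G : SimpleGraph V) [DecidableRel G.Adj] (n e : ℕ)
    (hn : Fintype.card V = n) (he : G.edgeFinset.card = e)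
    (he0 : 0 < e) (heN : e < n * (n - 1) / 2)
    (m m' : ℕ) (hm' : m' * e = m * (n * (n - 1) / 2 - e)) :
    CanPartitionMultiKn G m ↔ CanPartitionMultiKn Gᶜ m' := by
  have hN : #(⊤ : SimpleGraph V).edgeFinset = n * (n - 1) / 2 := by
    rw [card_edgeFinset_top_eq_card_choose_two, hn, Nat.choose_two_right]
  subst he
  rw [← hN] at heN hm'
  refine ⟨fun h => h.compl he0 hm', fun h => ?_⟩
  have hGc := card_edgeFinset_compl G
  simpa using h.compl (by omega) (by rw [hGc, Nat.sub_sub_self heN.le, hm'])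
end

section
/- Let n > 2 and let G = K_{1,n-1} be the star on n vertices. If m·K_n is partitioned into copies of G, then m is even. Moreover, 2·K_n can be partitioned into n copies of K_{1,n-1} (one star centered at each vertex). Hence M(K_{1,n-1}) = 2ℕ. -/
namespace SimpleGraph

variable {V W : Type*}

def Iso.starGraph (e : V ≃ W) (c : V) : starGraph c ≃g starGraph (e c) where
  toEquiv := e
  map_rel_iff' := by simp [e.apply_eq_iff_eq]

theorem eq_starGraph_of_iso {G : SimpleGraph V} {c : W} (e : G ≃g starGraph c) :
    G = starGraph (e.symm c) := by
  ext u v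
  rw [← e.map_rel_iff]
  simp only [starGraph_adj, ne_eq, e.injective.eq_iff, ← RelIso.eq_symm_apply]

theorem completeBipartiteGraph_eq_starGraph (α β : Type*) [Unique α] :
    completeBipartiteGraph α β = starGraph (Sum.inl default) := by
  ext (a | a) (b | b) <;> simp [Unique.eq_default]

theorem card_starGraph_adj {ι : Type*} [Finite ι] (center : ι → V) {u v : V} (huv : u ≠ v) :
    Nat.card {i // (starGraph (center i)).Adj u v} =
      Nat.card {i // center i = u} + Nat.card {i // center i = v} := by
  classical
  have := Fintype.ofFinite ι
  simp only [starGraph_adj, huv, ne_eq, not_false_eq_true, true_and, Nat.card_eq_fintype_card]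
  simp_rw [eq_comm (a := u), eq_comm (a := v)]
  exact Fintype.card_subtype_or_disjoint _ _
    fun _ hu hv i hi => huv ((hu i hi).symm.trans (hv i hi))

end SimpleGraph

open SimpleGraph

theorem even_of_forall_ne_add_eq {V : Type*} [Fintype V] (hV : 2 < Fintype.card V)
    {f : V → ℕ} {m : ℕ} (hf : ∀ u v, u ≠ v → f u + f v = m) : Even m := by
  obtain ⟨x, y, z, hxy, hxz, hyz⟩ := Fintype.two_lt_card_iff.mp hV
  have := hf x y hxy; have := hf x z hxz; have := hf y z hyz
  exact ⟨f x, by omega⟩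

namespace CanPartitionMultiKn

variable {V : Type*} {G : SimpleGraph V}

theorem zero (G : SimpleGraph V) : CanPartitionMultiKn G 0 :=
  ⟨0, Fin.elim0, fun i => i.elim0, fun _ _ _ => Nat.card_of_isEmpty⟩

theorem add {a b : ℕ} (ha : CanPartitionMultiKn G a) (hb : CanPartitionMultiKn G b) :
    CanPartitionMultiKn G (a + b) := by
  obtain ⟨l₁, H₁, hiso₁, hcard₁⟩ := ha
  obtain ⟨l₂, H₂, hiso₂, hcard₂⟩ := hb
  have hiso : ∀ j, Nonempty (Sum.elim H₁ H₂ j ≃g G) := Sum.forall.2 ⟨hiso₁, hiso₂⟩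
  refine ⟨l₁ + l₂, fun i => Sum.elim H₁ H₂ (finSumFinEquiv.symm i), fun i => hiso _,
    fun u v huv => ?_⟩
  calc Nat.card {i : Fin (l₁ + l₂) // (Sum.elim H₁ H₂ (finSumFinEquiv.symm i)).Adj u v}
        = Nat.card {j : Fin l₁ ⊕ Fin l₂ // (Sum.elim H₁ H₂ j).Adj u v} :=
          Nat.card_congr (finSumFinEquiv.symm.subtypeEquiv fun _ => Iff.rfl)
      _ = Nat.card {j // (H₁ j).Adj u v} + Nat.card {j // (H₂ j).Adj u v} :=
          (Nat.card_congr Equiv.subtypeSum).trans Nat.card_sum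
      _ = a + b := by rw [hcard₁ u v huv, hcard₂ u v huv]

theorem mul {m : ℕ} (h : CanPartitionMultiKn G m) (k : ℕ) : CanPartitionMultiKn G (k * m) := by
  induction k with
  | zero => simpa using zero G
  | succ k ih => simpa [Nat.succ_mul] using ih.add h

end CanPartitionMultiKn

variable {V : Type*}

theorem canPartitionMultiKn_starGraph_two [Fintype V] (c : V) :
    CanPartitionMultiKn (starGraph c) 2 := by
  classical
  let center := (Fintype.equivFin V).symm
  refine ⟨Fintype.card V, fun i => starGraph (center i), fun i => ?_, fun u v huv => ?_⟩
  · exact ⟨(Iso.starGraph (Equiv.swap (center i) c) _).trans (by rw [Equiv.swap_apply_left])⟩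
  · have hfiber : ∀ w, Nat.card {i // center i = w} = 1 := fun w =>
      (Nat.card_congr (center.subtypeEquiv (q := (· = w)) fun _ => Iff.rfl)).trans Nat.card_unique
    rw [card_starGraph_adj center huv, hfiber, hfiber]

theorem even_of_canPartitionMultiKn_starGraph [Fintype V] (hV : 2 < Fintype.card V) {c : V}
    {m : ℕ} (h : CanPartitionMultiKn (starGraph c) m) : Even m := by
  obtain ⟨l, H, hiso, hcard⟩ := h
  obtain ⟨center, rfl⟩ : ∃ center : Fin l → V, H = fun i => starGraph (center i) :=
    ⟨fun i => (hiso i).some.symm c, funext fun i => eq_starGraph_of_iso (hiso i).some⟩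
  exact even_of_forall_ne_add_eq hV (f := fun v => Nat.card {i // center i = v})
    fun u v huv => by rw [← card_starGraph_adj center huv, hcard u v huv]

theorem star_partition_modulus (n : ℕ) (hn : 2 < n) :
    (∀ m : ℕ, CanPartitionMultiKn (completeBipartiteGraph (Fin 1) (Fin (n - 1))) m →
      Even m) ∧
    CanPartitionMultiKn (completeBipartiteGraph (Fin 1) (Fin (n - 1))) 2 ∧
    (∀ m : ℕ, 0 < m →
      (CanPartitionMultiKn (completeBipartiteGraph (Fin 1) (Fin (n - 1))) m ↔ Even m)) := by
  have hcard : 2 < Fintype.card (Fin 1 ⊕ Fin (n - 1)) := by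
    simp only [Fintype.card_sum, Fintype.card_fin]; omega
  rw [completeBipartiteGraph_eq_starGraph]
  have even := fun m =>
    even_of_canPartitionMultiKn_starGraph (c := Sum.inl default) (m := m) hcard
  have two := canPartitionMultiKn_starGraph_two (Sum.inl default : Fin 1 ⊕ Fin (n - 1))
  refine ⟨even, two, fun m _ => ⟨even m, ?_⟩⟩
  rintro ⟨k, rfl⟩
  rw [← two_mul, mul_comm]
  exact two.mul k
end

section
/- Let n > 2, and suppose copies of the star K_{1,n-1} partition m·K_n. For each vertex i, let x_i be the number of stars centered at i. Then x_i + x_j = m for all i ≠ j, and consequently all x_i are equal to some value x with m = 2x. -/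
theorem star_centers_balanced (n : ℕ) (hn : 2 < n) (m l : ℕ)
    (c : Fin l → Fin n)  -- the centers of the stars in the partition
    (hcover : ∀ i j : Fin n, i ≠ j →
      Nat.card {t : Fin l // c t = i ∨ c t = j} = m) :
    (∀ i j : Fin n, i ≠ j →
      Nat.card {t : Fin l // c t = i} + Nat.card {t : Fin l // c t = j} = m) ∧
    ∃ x : ℕ, (∀ i : Fin n, Nat.card {t : Fin l // c t = i} = x) ∧ m = 2 * x := by
  have key : ∀ i j : Fin n, i ≠ j →
      Nat.card {t : Fin l // c t = i} + Nat.card {t : Fin l // c t = j} = m := by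
    intro i j hij
    rw [← hcover i j hij]
    simp only [Nat.card_eq_fintype_card, Fintype.card_subtype]
    rw [Finset.filter_or, Finset.card_union_of_disjoint]
    rw [Finset.disjoint_filter]
    rintro t _ rfl
    exact fun h => hij h
  refine ⟨key, ?_⟩
  have hthird : ∀ a b : Fin n, ∃ d : Fin n, d ≠ a ∧ d ≠ b := by
    intro a b
    have hc2 : ({a, b} : Finset (Fin n)).card ≤ 2 :=
      (Finset.card_insert_le _ _).trans (by simp)
    have hne : (Finset.univ \ ({a, b} : Finset (Fin n))).Nonempty := by
      rw [← Finset.card_pos, Finset.card_sdiff_of_subset (Finset.subset_univ _), Finset.card_univ,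
        Fintype.card_fin]
      omega
    obtain ⟨d, hd⟩ := hne
    simp only [Finset.mem_sdiff, Finset.mem_univ, true_and, Finset.mem_insert,
      Finset.mem_singleton, not_or] at hd
    exact ⟨d, hd.1, hd.2⟩
  have heq : ∀ a b : Fin n, Nat.card {t : Fin l // c t = a} = Nat.card {t : Fin l // c t = b} := by
    intro a b
    obtain ⟨d, hda, hdb⟩ := hthird a b
    have h1 := key a d (fun h => hda h.symm)
    have h2 := key b d (fun h => hdb h.symm)
    omega
  have h01 : (⟨0, by omega⟩ : Fin n) ≠ ⟨1, by omega⟩ := by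
    intro h; exact absurd (congrArg Fin.val h) (by simp)
  refine ⟨Nat.card {t : Fin l // c t = ⟨0, by omega⟩}, fun i => heq i ⟨0, by omega⟩, ?_⟩
  have := key ⟨0, by omega⟩ ⟨1, by omega⟩ h01
  rw [heq ⟨1, by omega⟩ ⟨0, by omega⟩] at this
  omega
end

section
/- Let G be a graph on n vertices with e edges, and let H be a doubly transitive permutation group on the vertex set of G. If the index of H ∩ Aut(G) in H is r, then the r images of G under H cover each pair of vertices exactly 2re/(n(n−1)) times. -/
/-- The automorphism group of a graph `G`, as a subgroup of the symmetric
group on its vertices. -/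
def autSubgroup {V : Type*} (G : SimpleGraph V) : Subgroup (Equiv.Perm V) where
  carrier := {σ | ∀ u v, G.Adj (σ u) (σ v) ↔ G.Adj u v}
  one_mem' := by intro u v; rfl
  mul_mem' := by
    intro a b ha hb u v
    simpa [Equiv.Perm.mul_apply] using (ha (b u) (b v)).trans (hb u v)
  inv_mem' := by
    intro a ha u v
    simpa using (ha (a⁻¹ u) (a⁻¹ v)).symm

/-!
Count the pairs (K, (a, b)) with K one of the images of G under H and (a, b) an ordered edge of K.
The images form an H-orbit with stabilizer H ∩ Aut(G), so there are r of them, and each contributes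
2e pairs. Since H permutes its images and is transitive on ordered pairs of distinct vertices, each
of the n(n - 1) ordered pairs is an edge of the same number of images, which is thus
2re / (n(n - 1)).
-/

open MulAction Finset

namespace MulAction

theorem smul_mem_orbit_subgroup_iff {M α : Type*} [Group M] [MulAction M α] {H : Subgroup M}
    {σ : M} (hσ : σ ∈ H) {x y : α} : σ • x ∈ orbit H y ↔ x ∈ orbit H y := by
  rw [← orbit_eq_iff, ← orbit_eq_iff, ← orbit_smul ⟨σ, hσ⟩ x]
  rfl

end MulAction

namespace SimpleGraph

variable {V : Type*}

instance : MulAction (Equiv.Perm V) (SimpleGraph V) where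
  smul σ K := K.map σ.toEmbedding
  one_smul K := by ext; simp [HSMul.hSMul]
  mul_smul σ τ K := by ext; simp [HSMul.hSMul]

theorem perm_smul_def (σ : Equiv.Perm V) (K : SimpleGraph V) : σ • K = K.map σ.toEmbedding :=
  rfl

@[simp]
theorem perm_smul_adj_apply (σ : Equiv.Perm V) (K : SimpleGraph V) (a b : V) :
    (σ • K).Adj (σ a) (σ b) ↔ K.Adj a b :=
  map_adj_apply (f := σ.toEmbedding)

theorem perm_smul_adj (σ : Equiv.Perm V) (K : SimpleGraph V) (a b : V) :
    (σ • K).Adj a b ↔ K.Adj (σ⁻¹ a) (σ⁻¹ b) := by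
  simpa using perm_smul_adj_apply σ K (σ⁻¹ a) (σ⁻¹ b)

theorem stabilizer_eq_autSubgroup (G : SimpleGraph V) :
    stabilizer (Equiv.Perm V) G = autSubgroup G := by
  ext σ
  refine ⟨fun h u v ↦ ?_, fun h ↦ ?_⟩
  · simpa only [mem_stabilizer_iff.mp h] using perm_smul_adj_apply σ G u v
  · refine mem_stabilizer_iff.mpr (SimpleGraph.ext <| funext₂ fun a b ↦ propext ?_)
    simpa [perm_smul_adj] using (h (σ⁻¹ a) (σ⁻¹ b)).symm

theorem ncard_orbit_eq_relIndex (H : Subgroup (Equiv.Perm V)) (G : SimpleGraph V) :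
    (orbit H G).ncard = (autSubgroup G).relIndex H := by
  rw [← index_stabilizer, ← stabilizer_eq_autSubgroup]
  rfl

theorem card_edgeFinset_perm_smul (σ : Equiv.Perm V) (K : SimpleGraph V) [Fintype K.edgeSet]
    [Fintype (σ • K).edgeSet] : #(σ • K).edgeFinset = #K.edgeFinset :=
  (Iso.map σ K).card_edgeFinset_eq.symm

open scoped Classical in
theorem card_filter_adj_perm_apply (Ω : Finset (SimpleGraph V)) {σ : Equiv.Perm V}
    (hΩ : ∀ K, σ • K ∈ Ω ↔ K ∈ Ω) (a b : V) :
    #{K ∈ Ω | K.Adj (σ a) (σ b)} = #{K ∈ Ω | K.Adj a b} :=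
  (card_equiv (MulAction.toPerm σ) fun K ↦ by simp [hΩ]).symm

variable [Fintype V]

theorem card_filter_adj_offDiag (K : SimpleGraph V) [DecidableRel K.Adj] :
    #{p ∈ (univ : Finset V).offDiag | K.Adj p.1 p.2} = 2 * #K.edgeFinset := by
  rw [← dart_card_eq_twice_card_edges]
  exact card_eq_of_equiv_fintype
    { toFun p := ⟨p.1, (mem_filter.1 p.2).2⟩
      invFun d := ⟨d.toProd, by simp [d.adj, d.fst_ne_snd]⟩
      left_inv _ := rfl
      right_inv _ := rfl }

open scoped Classical in
theorem card_offDiag_mul_eq_card_mul_two_mul (Ω : Finset (SimpleGraph V)) {e c : ℕ}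
    (he : ∀ K ∈ Ω, #K.edgeFinset = e)
    (hc : ∀ p ∈ (univ : Finset V).offDiag, #{K ∈ Ω | K.Adj p.1 p.2} = c) :
    #(univ : Finset V).offDiag * c = #Ω * (2 * e) :=
  calc #(univ : Finset V).offDiag * c
      = ∑ p ∈ (univ : Finset V).offDiag, #{K ∈ Ω | K.Adj p.1 p.2} := by
        rw [sum_congr rfl hc, sum_const, smul_eq_mul]
    _ = ∑ K ∈ Ω, #{p ∈ (univ : Finset V).offDiag | K.Adj p.1 p.2} :=
        sum_card_bipartiteAbove_eq_sum_card_bipartiteBelow _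
    _ = #Ω * (2 * e) := by
        rw [sum_congr rfl fun K hK ↦ (card_filter_adj_offDiag K).trans (by rw [he K hK]),
          sum_const, smul_eq_mul]

end SimpleGraph

open SimpleGraph in
theorem two_transitive_images_cover {V : Type*} [Fintype V] [DecidableEq V]
    (G : SimpleGraph V) [DecidableRel G.Adj] (n e : ℕ)
    (hn : Fintype.card V = n) (he : G.edgeFinset.card = e)
    (H : Subgroup (Equiv.Perm V))
    (h2 : ∀ a b c d : V, a ≠ b → c ≠ d → ∃ σ ∈ H, σ a = c ∧ σ b = d)
    (r : ℕ) (hr : (autSubgroup G).relIndex H = r) :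
    ∀ u v : V, u ≠ v →
      Nat.card {K : SimpleGraph V //
          (∃ σ ∈ H, G.map (Equiv.toEmbedding σ) = K) ∧ K.Adj u v} =
        2 * r * e / (n * (n - 1)) := by
  classical
  intro u v huv
  set Ω := (orbit H G).toFinset
  have hΩ : ∀ K, K ∈ Ω ↔ ∃ σ ∈ H, G.map (Equiv.toEmbedding σ) = K := by
    simp [Ω, mem_orbit_iff, perm_smul_def]
  have hcard : #Ω = r := by
    rw [← Set.ncard_eq_toFinset_card', ncard_orbit_eq_relIndex, hr]
  have hedges : ∀ K ∈ Ω, #K.edgeFinset = e := by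
    rintro K hK
    obtain ⟨σ, -, rfl⟩ := (hΩ K).1 hK
    rw [← he, ← perm_smul_def, card_edgeFinset_perm_smul]
  have hconst : ∀ p ∈ (univ : Finset V).offDiag,
      #{K ∈ Ω | K.Adj p.1 p.2} = #{K ∈ Ω | K.Adj u v} := by
    rintro ⟨a, b⟩ hab
    obtain ⟨σ, hσ, rfl, rfl⟩ := h2 a b u v (mem_offDiag.1 hab).2.2 huv
    exact (card_filter_adj_perm_apply Ω
      (fun K ↦ by simpa [Ω] using smul_mem_orbit_subgroup_iff hσ (x := K) (y := G)) a b).symm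
  have hcount := card_offDiag_mul_eq_card_mul_two_mul Ω hedges hconst
  have hoff : #(univ : Finset V).offDiag = n * (n - 1) := by
    rw [offDiag_card, card_univ, hn, Nat.mul_sub_one]
  have hpos : 0 < n * (n - 1) := hoff ▸ card_pos.2 ⟨(u, v), by simpa using huv⟩
  rw [Nat.card_eq_fintype_card, Fintype.card_subtype]
  simp_rw [← hΩ]
  rw [← filter_filter, filter_univ_mem]
  refine (Nat.div_eq_of_eq_mul_left hpos ?_).symm
  rw [← hoff, ← hcard]
  linarith
end

section
/- Fisher's inequality: in any 2-(v, k, λ) design with k < v, the number of blocks is at least the number of points. -/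
/-!
Let `M` be the `v × b` incidence matrix of the design and `r_p` the number of blocks through `p`.
Counting the pairs `(q, B)` with `q ≠ p` and `p, q ∈ B` gives `r_p (k - 1) = λ (v - 1)`, so
`r_p > λ` because `k < v`. Hence `M Mᵀ = diag(r_p - λ) + λ J` is positive definite, so it has
rank `v`, and `v = rank (M Mᵀ) ≤ rank M ≤ b`.
-/

open Finset Matrix

namespace BlockDesign

variable {α ι : Type*} [Fintype ι] [DecidableEq α]

def replicationNumber (B : ι → Finset α) (p : α) : ℕ := #{i | p ∈ B i}

def pairCount (B : ι → Finset α) (p q : α) : ℕ := #{i | p ∈ B i ∧ q ∈ B i}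

def incidenceMatrix (R : Type*) [Zero R] [One R] (B : ι → Finset α) : Matrix α ι R :=
  of fun p i => if p ∈ B i then 1 else 0

theorem pairCount_self (B : ι → Finset α) (p : α) : pairCount B p p = replicationNumber B p := by
  simp [pairCount, replicationNumber]

theorem incidenceMatrix_mul_transpose_apply {R : Type*} [NonAssocSemiring R]
    (B : ι → Finset α) (p q : α) :
    (incidenceMatrix R B * (incidenceMatrix R B)ᵀ) p q = pairCount B p q := by
  simp only [mul_apply, transpose_apply, incidenceMatrix, of_apply, mul_ite, mul_one, mul_zero,
    pairCount, card_filter, Nat.cast_sum, Nat.cast_ite, Nat.cast_one, Nat.cast_zero]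
  exact sum_congr rfl fun i _ => by by_cases p ∈ B i <;> by_cases q ∈ B i <;> simp [*]

theorem incidenceMatrix_mul_transpose_eq {R : Type*} [Ring R] {lam : ℕ} {B : ι → Finset α}
    (hpair : ∀ p q, p ≠ q → pairCount B p q = lam) :
    incidenceMatrix R B * (incidenceMatrix R B)ᵀ =
      diagonal (fun p => (replicationNumber B p : R) - lam) + of fun _ _ => (lam : R) := by
  ext p q
  rw [incidenceMatrix_mul_transpose_apply, Matrix.add_apply, of_apply]
  obtain rfl | hpq := eq_or_ne p q
  · rw [diagonal_apply_eq, pairCount_self, sub_add_cancel]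
  · rw [diagonal_apply_ne _ hpq, hpair p q hpq, zero_add]

variable [Fintype α]

theorem sum_pairCount_erase {k : ℕ} {B : ι → Finset α} (hcard : ∀ i, #(B i) = k) (p : α) :
    ∑ q ∈ univ.erase p, pairCount B p q = replicationNumber B p * (k - 1) := by
  have hbelow : ∀ i ∈ ({i | p ∈ B i} : Finset ι),
      #((univ.erase p).bipartiteBelow (fun q i => q ∈ B i) i) = k - 1 := by
    intro i hi
    have hp : p ∈ B i := (mem_filter.mp hi).2
    have : (univ.erase p).bipartiteBelow (fun q i => q ∈ B i) i = (B i).erase p := by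
      ext q; simp [bipartiteBelow, and_comm]
    rw [this, card_erase_of_mem hp, hcard]
  calc ∑ q ∈ univ.erase p, pairCount B p q
      = ∑ q ∈ univ.erase p,
          #(({i | p ∈ B i} : Finset ι).bipartiteAbove (fun q i => q ∈ B i) q) := by
        simp [pairCount, bipartiteAbove, filter_filter]
    _ = ∑ i ∈ ({i | p ∈ B i} : Finset ι),
          #((univ.erase p).bipartiteBelow (fun q i => q ∈ B i) i) :=
        sum_card_bipartiteAbove_eq_sum_card_bipartiteBelow _
    _ = replicationNumber B p * (k - 1) := by
        rw [sum_congr rfl hbelow, sum_const, smul_eq_mul, replicationNumber]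

theorem replicationNumber_mul {k lam : ℕ} {B : ι → Finset α} (hcard : ∀ i, #(B i) = k)
    (hpair : ∀ p q, p ≠ q → pairCount B p q = lam) (p : α) :
    replicationNumber B p * (k - 1) = lam * (Fintype.card α - 1) := by
  rw [← sum_pairCount_erase hcard p, sum_congr rfl fun q hq => hpair p q (ne_of_mem_erase hq).symm,
    sum_const, card_erase_of_mem (mem_univ p), card_univ, smul_eq_mul, mul_comm]

theorem lt_replicationNumber {k lam : ℕ} {B : ι → Finset α} (hcard : ∀ i, #(B i) = k)
    (hpair : ∀ p q, p ≠ q → pairCount B p q = lam) (hk : 1 ≤ k) (hkv : k < Fintype.card α)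
    (hlam : 1 ≤ lam) (p : α) : lam < replicationNumber B p := by
  by_contra! h
  have hlt : lam * (k - 1) < lam * (Fintype.card α - 1) :=
    Nat.mul_lt_mul_of_pos_left (by omega) hlam
  rw [← replicationNumber_mul hcard hpair p] at hlt
  exact (Nat.mul_le_mul_right _ h).not_gt hlt

end BlockDesign

theorem Matrix.posDef_diagonal_add_const {n : Type*} [Fintype n] [DecidableEq n] {d : n → ℚ}
    (hd : ∀ i, 0 < d i) {c : ℚ} (hc : 0 ≤ c) : (diagonal d + of fun _ _ => c).PosDef := by
  have hJ : (of fun _ _ => c : Matrix n n ℚ) = c • vecMulVec 1 (star 1) := by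
    ext i j; simp
  rw [hJ]
  exact (PosDef.diagonal hd).add_posSemidef ((posSemidef_vecMulVec_self_star 1).smul hc)

theorem Matrix.card_le_card_of_isUnit_mul_transpose {m n K : Type*} [Fintype m] [Fintype n]
    [DecidableEq m] [Field K] (M : Matrix m n K) (h : IsUnit (M * Mᵀ)) :
    Fintype.card m ≤ Fintype.card n :=
  calc Fintype.card m = (M * Mᵀ).rank := (rank_of_isUnit _ h).symm
    _ ≤ M.rank := rank_mul_le_left M Mᵀ
    _ ≤ Fintype.card n := rank_le_card_width M

theorem fisher_inequality (v k lam b : ℕ) (hk2 : 2 ≤ k) (hkv : k < v)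
    (hlam : 1 ≤ lam) (B : Fin b → Finset (Fin v))
    (hcard : ∀ i, (B i).card = k)
    (hcover : ∀ p q : Fin v, p ≠ q →
      Nat.card {i : Fin b // p ∈ B i ∧ q ∈ B i} = lam) :
    v ≤ b := by
  have hpair : ∀ p q, p ≠ q → BlockDesign.pairCount B p q = lam := fun p q hpq => by
    rw [← hcover p q hpq, Nat.card_eq_fintype_card, Fintype.card_subtype, BlockDesign.pairCount]
  have hr := BlockDesign.lt_replicationNumber hcard hpair (by omega) (by simpa using hkv) hlam
  have hpos : (BlockDesign.incidenceMatrix ℚ B * (BlockDesign.incidenceMatrix ℚ B)ᵀ).PosDef := by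
    rw [BlockDesign.incidenceMatrix_mul_transpose_eq hpair]
    exact posDef_diagonal_add_const (fun p => sub_pos.mpr (by exact_mod_cast hr p))
      (Nat.cast_nonneg lam)
  simpa using card_le_card_of_isUnit_mul_transpose _ hpos.isUnit
end

section
/- Let l ≥ 5 be odd. Then 2·K_{l(l−1)/2} cannot be partitioned into copies of the triangular graph T(l). (Proof sketch: such a partition would consist of (l+1)/2 adjacency matrices A_i summing to 2(J−I); each A_i has a (−2)-eigenspace of dimension C(l,2) − l inside the complement of the all-ones vector; the intersection of the first (l−1)/2 of these eigenspaces has positive dimension, and a nonzero vector x in it satisfies A_{(l+1)/2} x = (l−3)x, contradicting that l−3 is not an eigenvalue of T(l) other than on excluded spaces.) -/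
/-- The triangular graph `T(l)`: the line graph of `K_l`, whose vertices are
the 2-element subsets of an `l`-set, adjacent when they intersect. -/
def triangularGraph (l : ℕ) : SimpleGraph {s : Finset (Fin l) // s.card = 2} where
  Adj a b := a ≠ b ∧ (a.1 ∩ b.1).Nonempty
  symm := by constructor; intro a b h; exact ⟨h.1.symm, by rw [Finset.inter_comm]; exact h.2⟩
  loopless := by constructor; intro a h; exact h.1 rfl

/-!
For a copy `G` of `T(l)` let `M` be the `l × V(G)` incidence matrix between the points of the
`l`-set and the pairs labelling the vertices, so that `Mᵀ M = A + 2` and `M Mᵀ = (l - 2) I + J`.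
Then `ker M` lies in `1^⊥` with codimension at most `l - 1` there, and `A = -2` on it. On `1^⊥`
the value `l - 3` is not an eigenvalue of `A`: `Mᵀ M x = (l - 1) x` makes `y = M x` an eigenvector
of `M Mᵀ` for `l - 1`, while `M Mᵀ y = (l - 2) y` since `1 ⬝ᵥ y = 2 (1 ⬝ᵥ x) = 0`.

A decomposition of `2 K_n` into copies of `T(l)` has `(l + 1) / 2` copies by degree counting. The
kernels of all but one copy meet in a nonzero `x ∈ 1^⊥` by the dimension count, and
`∑ Aᵢ = 2 (J - I)` then gives `A x = (l - 3) x` for the remaining copy.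
-/

open Finset Matrix Module SimpleGraph

section Decomposition

variable {ι V R : Type*} [Fintype ι] [DecidableEq V] [Ring R]

theorem sum_adjMatrix_eq_smul_top {H : ι → SimpleGraph V} [∀ i, DecidableRel (H i).Adj]
    {m : ℕ} (hH : ∀ u v, u ≠ v → Nat.card {i // (H i).Adj u v} = m) :
    ∑ i, (H i).adjMatrix R = (m : R) • (⊤ : SimpleGraph V).adjMatrix R := by
  ext u v
  rcases eq_or_ne u v with rfl | huv
  · simp [Matrix.sum_apply]
  · simp [Matrix.sum_apply, adjMatrix_apply, sum_boole, huv, ← hH u v huv,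
      Nat.card_eq_fintype_card, Fintype.card_subtype]

theorem top_adjMatrix_mulVec_apply [Fintype V] (x : V → R) (u : V) :
    ((⊤ : SimpleGraph V).adjMatrix R *ᵥ x) u = ∑ v, x v - x u := by
  rw [adjMatrix_mulVec_apply, neighborFinset_top, ← sum_erase_eq_sub (mem_univ u)]
  congr 1
  ext; simp

end Decomposition

abbrev TwoSubset (l : ℕ) := {s : Finset (Fin l) // s.card = 2}

namespace TwoSubset

variable {l : ℕ}

theorem card_filter_mem (a : Fin l) : #{w : TwoSubset l | a ∈ w.1} = l - 1 := by
  have hpair : ∀ b ∈ univ.erase a, ({a, b} : Finset (Fin l)).card = 2 := fun b hb =>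
    card_pair (ne_of_mem_erase hb).symm
  have : #(univ.erase a) = l - 1 := by simp
  rw [← this]
  symm
  refine card_bij (fun b hb => ⟨{a, b}, hpair b hb⟩) (by simp) ?_ ?_
  · intro b hb c hc h
    have : b ∈ ({a, c} : Finset (Fin l)) := by simp [← Subtype.mk.inj h]
    simpa [(ne_of_mem_erase hb)] using this
  · rintro ⟨w, hw⟩ ha
    obtain ⟨c, d, hcd, rfl⟩ := card_eq_two.mp hw
    simp only [mem_filter, mem_univ, true_and, mem_insert, mem_singleton] at ha
    rcases ha with rfl | rfl
    · exact ⟨d, by simpa using hcd.symm, rfl⟩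
    · exact ⟨c, by simpa using hcd, by simp [pair_comm]⟩

theorem card_filter_mem_mem {a b : Fin l} (hab : a ≠ b) :
    #{w : TwoSubset l | a ∈ w.1 ∧ b ∈ w.1} = 1 := by
  rw [card_eq_one]
  refine ⟨⟨{a, b}, card_pair hab⟩, ?_⟩
  ext ⟨w, hw⟩
  simp only [mem_filter, mem_univ, true_and, mem_singleton, Subtype.mk.injEq]
  constructor
  · rintro ⟨ha, hb⟩
    exact (eq_of_subset_of_card_le (insert_subset ha (singleton_subset_iff.mpr hb))
      (by rw [hw, card_pair hab])).symm
  · rintro rfl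
    simp

theorem card_inter_le_one {w w' : TwoSubset l} (h : w ≠ w') : #(w.1 ∩ w'.1) ≤ 1 := by
  by_contra! hc
  have hw : w.1 ∩ w'.1 = w.1 := eq_of_subset_of_card_le inter_subset_left (by omega)
  exact h (Subtype.ext (eq_of_subset_of_card_le (hw ▸ inter_subset_right) (by rw [w.2, w'.2])))

end TwoSubset

section TriangularIncidence

variable {V : Type*} {G : SimpleGraph V} {l : ℕ} (R : Type*) [CommRing R]

def triangularIncidence (e : G ≃g triangularGraph l) : Matrix (Fin l) V R :=
  of fun a v => if a ∈ (e v).1 then 1 else 0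

variable {R} (e : G ≃g triangularGraph l)

theorem triangularIncidence_transpose_mul [Fintype V] [DecidableEq V] [DecidableRel G.Adj] :
    (triangularIncidence R e)ᵀ * triangularIncidence R e = G.adjMatrix R + 2 := by
  ext u v
  have hinter : ((triangularIncidence R e)ᵀ * triangularIncidence R e) u v =
      #((e u).1 ∩ (e v).1) := by
    simp [mul_apply, triangularIncidence, ← ite_and, ← mem_inter, inter_comm]
  rw [hinter]
  rcases eq_or_ne u v with rfl | huv
  · simp [(e u).2, ofNat_apply]
  have hne : e u ≠ e v := e.injective.ne huv
  by_cases hadj : G.Adj u v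
  · have hmeet := ((e.map_adj_iff).mpr hadj).2
    have : #((e u).1 ∩ (e v).1) = 1 :=
      le_antisymm (TwoSubset.card_inter_le_one hne) (card_pos.mpr hmeet)
    simp [this, hadj, huv, ofNat_apply]
  · have : (e u).1 ∩ (e v).1 = ∅ := not_nonempty_iff_eq_empty.mp fun h =>
      hadj (e.map_adj_iff.mp ⟨hne, h⟩)
    simp [this, hadj, huv, ofNat_apply]

theorem triangularIncidence_mul_transpose_apply [Fintype V] (a b : Fin l) :
    (triangularIncidence R e * (triangularIncidence R e)ᵀ) a b =
      if a = b then (l - 1 : R) else 1 := by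
  have hsum : (triangularIncidence R e * (triangularIncidence R e)ᵀ) a b =
      #{w : TwoSubset l | a ∈ w.1 ∧ b ∈ w.1} := by
    rw [← sum_boole, ← e.toEquiv.sum_comp]
    simp [mul_apply, triangularIncidence, ← ite_and, and_comm]
  rw [hsum]
  rcases eq_or_ne a b with rfl | hab
  · simp [TwoSubset.card_filter_mem, Nat.cast_sub (Nat.one_le_of_lt a.2)]
  · simp [TwoSubset.card_filter_mem_mem hab, hab]

theorem one_vecMul_triangularIncidence : 1 ᵥ* triangularIncidence R e = 2 := by
  ext v
  simp [vecMul, dotProduct, triangularIncidence, (e v).2]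

theorem triangularIncidence_mulVec_one [Fintype V] :
    triangularIncidence R e *ᵥ 1 = (l - 1 : R) • 1 := by
  ext a
  have : (triangularIncidence R e *ᵥ 1) a = #{w : TwoSubset l | a ∈ w.1} := by
    rw [← sum_boole, ← e.toEquiv.sum_comp]
    simp [mulVec, dotProduct, triangularIncidence]
  simp [this, TwoSubset.card_filter_mem, Nat.cast_sub (Nat.one_le_of_lt a.2)]

theorem sum_triangularIncidence_mulVec [Fintype V] (x : V → R) :
    ∑ a, (triangularIncidence R e *ᵥ x) a = 2 * ∑ v, x v := by
  rw [← one_dotProduct, dotProduct_mulVec, one_vecMul_triangularIncidence]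
  simp [dotProduct, mul_sum]

theorem sum_eq_zero_of_triangularIncidence_mulVec_eq_zero {K : Type*} [Field K] [NeZero (2 : K)]
    [Fintype V] {x : V → K} (hx : triangularIncidence K e *ᵥ x = 0) : ∑ v, x v = 0 := by
  have h := sum_triangularIncidence_mulVec e x
  simp only [hx, Pi.zero_apply, sum_const_zero] at h
  exact (mul_eq_zero.mp h.symm).resolve_left two_ne_zero

theorem triangularIncidence_mul_transpose_mulVec [Fintype V] {y : Fin l → R}
    (hy : ∑ a, y a = 0) :
    (triangularIncidence R e * (triangularIncidence R e)ᵀ) *ᵥ y = (l - 2 : R) • y := by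
  ext a
  have hentry (b : Fin l) : (if a = b then (l - 1 : R) else 1) * y b =
      y b + if a = b then (l - 2 : R) * y b else 0 := by
    split_ifs <;> ring
  simp only [mulVec, dotProduct, triangularIncidence_mul_transpose_apply, hentry,
    sum_add_distrib, hy, sum_ite_eq, mem_univ, if_true, zero_add, Pi.smul_apply, smul_eq_mul]

theorem adjMatrix_mulVec_of_triangularIncidence_mulVec_eq_zero [Fintype V] [DecidableEq V]
    [DecidableRel G.Adj] {x : V → R} (hx : triangularIncidence R e *ᵥ x = 0) :
    G.adjMatrix R *ᵥ x = (-2 : R) • x := by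
  have := congrArg (· *ᵥ x) (triangularIncidence_transpose_mul e)
  simp only [← mulVec_mulVec, hx, mulVec_zero, add_mulVec, ofNat_mulVec] at this
  rw [neg_smul]
  exact eq_neg_of_add_eq_zero_left this.symm

theorem triangularGraph_iso_adjMatrix_mulVec_one [Fintype V] [DecidableEq V] [DecidableRel G.Adj]
    (e : G ≃g triangularGraph l) :
    G.adjMatrix R *ᵥ 1 = (2 * l - 4 : R) • 1 := by
  have := congrArg (· *ᵥ (1 : V → R)) (triangularIncidence_transpose_mul e)
  simp only [← mulVec_mulVec, triangularIncidence_mulVec_one, mulVec_smul, mulVec_transpose,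
    one_vecMul_triangularIncidence, add_mulVec, ofNat_mulVec] at this
  ext v
  have hv := congrFun this v
  simp only [Pi.smul_apply, Pi.add_apply, Pi.ofNat_apply, smul_eq_mul] at hv ⊢
  linear_combination -hv

theorem eq_zero_of_adjMatrix_mulVec_eq_sub_three_smul {K : Type*} [Field K] [CharZero K] [Fintype V]
    [DecidableEq V] [DecidableRel G.Adj] (e : G ≃g triangularGraph l) (hl : l ≠ 1) {x : V → K}
    (hx : ∑ v, x v = 0) (hAx : G.adjMatrix K *ᵥ x = (l - 3 : K) • x) : x = 0 := by
  set N := triangularIncidence K e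
  have hNtN : Nᵀ *ᵥ (N *ᵥ x) = (l - 1 : K) • x := by
    rw [mulVec_mulVec, triangularIncidence_transpose_mul, add_mulVec, hAx, ofNat_mulVec]
    module
  have hNx : N *ᵥ x = 0 := by
    have h1 := triangularIncidence_mul_transpose_mulVec e
      (by rw [sum_triangularIncidence_mulVec, hx, mul_zero] : ∑ a, (N *ᵥ x) a = 0)
    rw [← mulVec_mulVec, hNtN, mulVec_smul] at h1
    calc N *ᵥ x = (l - 1 : K) • N *ᵥ x - (l - 2 : K) • N *ᵥ x := by module
      _ = 0 := by rw [h1, sub_self]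
  have hl' : (l - 1 : K) ≠ 0 := sub_ne_zero.mpr (by exact_mod_cast hl)
  simpa [hNx, hl'] using hNtN.symm

end TriangularIncidence

theorem Submodule.finrank_le_finrank_inf_biInf_add {K V ι : Type*} [DivisionRing K]
    [AddCommGroup V] [Module K V] [FiniteDimensional K V] (W : Submodule K V)
    (U : ι → Submodule K V) (s : Finset ι) {c : ℕ}
    (hU : ∀ i ∈ s, U i ≤ W ∧ finrank K W ≤ finrank K (U i) + c) :
    finrank K W ≤ finrank K ↥(W ⊓ ⨅ i ∈ s, U i) + #s * c := by
  classical
  induction s using Finset.induction_on with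
  | empty => rw [show W ⊓ ⨅ i ∈ (∅ : Finset ι), U i = W by simp]; simp
  | insert j s hj ih =>
    obtain ⟨hjW, hjc⟩ := hU j (mem_insert_self j s)
    have ih := ih fun i hi => hU i (mem_insert_of_mem hi)
    have hsup := Submodule.finrank_sup_add_finrank_inf_eq (U j) (W ⊓ ⨅ i ∈ s, U i)
    have hsupW := Submodule.finrank_mono (sup_le hjW (inf_le_left : W ⊓ ⨅ i ∈ s, U i ≤ W))
    rw [Finset.iInf_insert, inf_left_comm, card_insert_of_notMem hj, add_one_mul]
    omega

theorem exists_ne_zero_sum_eq_zero_forall_mulVec_eq_zero {K V ι : Type*} [Field K] [Fintype V]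
    {m : ℕ} (M : ι → Matrix (Fin m) V K) (s : Finset ι)
    (hM : ∀ i ∈ s, ∀ x, M i *ᵥ x = 0 → ∑ v, x v = 0)
    (hcard : #s * (m - 1) + 2 ≤ Fintype.card V) :
    ∃ x ≠ 0, ∑ v, x v = 0 ∧ ∀ i ∈ s, M i *ᵥ x = 0 := by
  classical
  let σ : (V → K) →ₗ[K] K := ∑ v, LinearMap.proj v
  have hσ (x : V → K) : σ x = ∑ v, x v := by simp [σ]
  obtain ⟨v₀⟩ : Nonempty V := Fintype.card_pos_iff.mp (by omega)
  have hσ0 : σ ≠ 0 := fun h => by simpa [hσ] using LinearMap.congr_fun h (Pi.single v₀ 1)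
  have hW := Dual.finrank_ker_add_one_of_ne_zero hσ0
  rw [finrank_fintype_fun_eq_card] at hW
  have hU : ∀ i ∈ s, LinearMap.ker (M i).mulVecLin ≤ LinearMap.ker σ ∧
      finrank K (LinearMap.ker σ) ≤ finrank K (LinearMap.ker (M i).mulVecLin) + (m - 1) := by
    intro i hi
    have hUW : LinearMap.ker (M i).mulVecLin ≤ LinearMap.ker σ := fun x hx =>
      (hσ x).trans (hM i hi x hx)
    have hrank : (M i).rank + finrank K (LinearMap.ker (M i).mulVecLin) = Fintype.card V := by
      rw [← finrank_fintype_fun_eq_card (R := K)]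
      exact LinearMap.finrank_range_add_finrank_ker (M i).mulVecLin
    have hm : (M i).rank ≤ m := by simpa using (M i).rank_le_card_height
    have := Submodule.finrank_mono hUW
    exact ⟨hUW, by omega⟩
  have hpos := (LinearMap.ker σ).finrank_le_finrank_inf_biInf_add _ s hU
  obtain ⟨⟨x, hx⟩, hx0⟩ := finrank_pos_iff_exists_ne_zero.mp
    (by omega : 0 < finrank K ↥(LinearMap.ker σ ⊓ ⨅ i ∈ s, LinearMap.ker (M i).mulVecLin))
  simp only [Submodule.mem_inf, Submodule.mem_iInf, LinearMap.mem_ker, hσ, mulVecLin_apply] at hx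
  exact ⟨x, by simpa using hx0, hx⟩

theorem four_mul_card_eq_of_triangular_decomposition {ι : Type*} [Fintype ι] {l m : ℕ}
    (hl : 3 ≤ l) {H : ι → SimpleGraph (TwoSubset l)} [∀ i, DecidableRel (H i).Adj]
    (e : ∀ i, H i ≃g triangularGraph l)
    (hH : ∀ u v, u ≠ v → Nat.card {i // (H i).Adj u v} = m) :
    4 * Fintype.card ι = m * (l + 1) := by
  let u : TwoSubset l := ⟨{⟨0, by omega⟩, ⟨1, by omega⟩}, card_pair (by simp [Fin.ext_iff])⟩
  -- degree count at `u`: `|ι| (2l - 4) = m (C(l, 2) - 1) = m (l - 2) (l + 1) / 2`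
  have hdeg := congrFun (congrArg (· *ᵥ 1) (sum_adjMatrix_eq_smul_top (R := ℚ) hH)) u
  simp only [sum_mulVec, triangularGraph_iso_adjMatrix_mulVec_one (e _), smul_mulVec,
    Pi.smul_apply, Pi.one_apply, top_adjMatrix_mulVec_apply, sum_const, card_univ,
    Fintype.card_finset_len, Fintype.card_fin, nsmul_eq_mul, smul_eq_mul, mul_one,
    Nat.cast_choose_two] at hdeg
  have hl2 : (l - 2 : ℚ) ≠ 0 := sub_ne_zero.mpr (by norm_cast; omega)
  have : (4 * Fintype.card ι : ℚ) = m * (l + 1) :=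
    mul_right_cancel₀ hl2 (by linear_combination 2 * hdeg)
  exact_mod_cast this

theorem triangular_no_double_partition_general (l : ℕ) (hl : 5 ≤ l) :
    ¬ CanPartitionMultiKn (triangularGraph l) 2 := by
  classical
  rintro ⟨k, H, hiso, hH⟩
  let e i := (hiso i).some
  have hk : 2 * k = l + 1 := by
    have := four_mul_card_eq_of_triangular_decomposition (by omega) e hH
    rw [Fintype.card_fin] at this
    omega
  let j₀ : Fin k := ⟨0, by omega⟩
  obtain ⟨x, hx0, hxsum, hxker⟩ := exists_ne_zero_sum_eq_zero_forall_mulVec_eq_zero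
    (fun i => triangularIncidence ℚ (e i)) (univ.erase j₀)
    (fun i _ _ => sum_eq_zero_of_triangularIncidence_mulVec_eq_zero (e i)) (by
      rw [card_erase_of_mem (mem_univ _), card_univ, Fintype.card_fin, Fintype.card_finset_len,
        Fintype.card_fin, Nat.choose_two_right, Nat.le_div_iff_mul_le two_pos]
      obtain ⟨j, rfl⟩ : ∃ j, l = 2 * j + 1 := ⟨k - 1, by omega⟩
      obtain rfl : k = j + 1 := by omega
      simp only [add_tsub_cancel_right]
      nlinarith)
  have htot : ∑ i, (H i).adjMatrix ℚ *ᵥ x = (-2 : ℚ) • x := by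
    rw [← sum_mulVec, sum_adjMatrix_eq_smul_top hH, smul_mulVec]
    ext u
    simp only [Pi.smul_apply, top_adjMatrix_mulVec_apply, hxsum, smul_eq_mul]
    ring
  have hA : ∀ i ∈ univ.erase j₀, (H i).adjMatrix ℚ *ᵥ x = (-2 : ℚ) • x := fun i hi =>
    adjMatrix_mulVec_of_triangularIncidence_mulVec_eq_zero (e i) (hxker i hi)
  rw [← add_sum_erase _ _ (mem_univ j₀), sum_congr rfl hA, sum_const,
    card_erase_of_mem (mem_univ j₀), card_univ, Fintype.card_fin] at htot
  refine hx0 (eq_zero_of_adjMatrix_mulVec_eq_sub_three_smul (e j₀) (by omega) hxsum ?_)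
  have hkℚ : (2 * k : ℚ) = l + 1 := by exact_mod_cast hk
  rw [eq_sub_of_add_eq htot, ← Nat.cast_smul_eq_nsmul ℚ, Nat.cast_sub (by omega)]
  linear_combination (norm := module) hkℚ • x

theorem triangular_no_double_partition (l : ℕ) (hl : 5 ≤ l) (hodd : Odd l) :
    ¬ CanPartitionMultiKn (triangularGraph l) 2 :=
  triangular_no_double_partition_general l hl
end
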